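/- For real numbers α₁, α₂ > 0 and α = α₁ + α₂, the function F(λ₁, λ₂) := λ₁^{2α₁} λ₂^{2α₂} / (λ₁² + λ₂²)^{α}, defined for (λ₁, λ₂) ≠ (0,0), satisfies the Marcinkiewicz condition: for every pair of nonnegative integers (a, b) there is a constant C_{a,b} such that |∂_{λ₂}^b ∂_{λ₁}^a F(λ₁, λ₂)| ≤ C_{a,b} λ₁^{−a} λ₂^{−b} for all λ₁, λ₂ > 0. -/

import Mathlib

/-!
Every derivative `∂ᵤ^a ∂ᵥ^b F` is a finite linear combination of terms
`u^p v^q (u² + v²)^r` with `p ≥ -a`, `q ≥ -b` and `p + q + 2r = -(a + b)`: the symbol `F` is such a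
term for `a = b = 0`, and `∂ᵤ (u^p v^q w^r) = p u^(p-1) v^q w^r + 2r u^(p+1) v^q w^(r-1)` with
`w = u² + v²` preserves these constraints with `a` raised by one. Each such term is bounded by
`x^(-a) y^(-b)`, because `(x² + y²)^(-(s+t)) ≤ x^(-2s) y^(-2t)` for `s, t ≥ 0`.
-/

open Filter Topology Submodule

noncomputable section

theorem Submodule.exists_mem_of_mem_span {R M N : Type*} [Semiring R] [AddCommMonoid M]
    [Module R M] [AddCommMonoid N] [Module R N] {s : Set M} {t : Submodule R N}
    {P : M → N → Prop} (zero : P 0 0)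
    (add : ∀ f₁ f₂ g₁ g₂, P f₁ g₁ → P f₂ g₂ → P (f₁ + f₂) (g₁ + g₂))
    (smul : ∀ (c : R) f g, P f g → P (c • f) (c • g)) (mem : ∀ f ∈ s, ∃ g ∈ t, P f g)
    {f : M} (hf : f ∈ span R s) : ∃ g ∈ t, P f g := by
  induction hf using Submodule.span_induction with
  | mem f hf => exact mem f hf
  | zero => exact ⟨0, t.zero_mem, zero⟩
  | add f₁ f₂ _ _ ih₁ ih₂ =>
    obtain ⟨g₁, hg₁, h₁⟩ := ih₁
    obtain ⟨g₂, hg₂, h₂⟩ := ih₂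
    exact ⟨g₁ + g₂, t.add_mem hg₁ hg₂, add _ _ _ _ h₁ h₂⟩
  | smul c f _ ih =>
    obtain ⟨g, hg, h⟩ := ih
    exact ⟨c • g, t.smul_mem c hg, smul _ _ _ h⟩

theorem Real.add_rpow_neg_add_le {X Y s t : ℝ} (hX : 0 < X) (hY : 0 < Y) (hs : 0 ≤ s)
    (ht : 0 ≤ t) : (X + Y) ^ (-(s + t)) ≤ X ^ (-s) * Y ^ (-t) := by
  rw [Real.rpow_neg (by positivity), Real.rpow_neg hX.le, Real.rpow_neg hY.le, ← mul_inv,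
    Real.rpow_add (by positivity)]
  exact inv_anti₀ (by positivity) <| mul_le_mul
    (Real.rpow_le_rpow hX.le (by linarith) hs) (Real.rpow_le_rpow hY.le (by linarith) ht)
    (by positivity) (by positivity)

def symbolMonomial (p q r : ℝ) (u v : ℝ) : ℝ :=
  u ^ p * v ^ q * (u ^ 2 + v ^ 2) ^ r

def symbolClass (a b : ℝ) : Submodule ℝ (ℝ → ℝ → ℝ) :=
  span ℝ {f | ∃ p q r, -a ≤ p ∧ -b ≤ q ∧ p + q + 2 * r = -(a + b) ∧ symbolMonomial p q r = f}

theorem symbolMonomial_mem_symbolClass {a b p q r : ℝ} (hp : -a ≤ p) (hq : -b ≤ q)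
    (hpq : p + q + 2 * r = -(a + b)) : symbolMonomial p q r ∈ symbolClass a b :=
  subset_span ⟨p, q, r, hp, hq, hpq, rfl⟩

theorem swap_symbolMonomial (p q r : ℝ) :
    Function.swap (symbolMonomial p q r) = symbolMonomial q p r := by
  funext u v
  simp only [Function.swap, symbolMonomial]
  ring_nf

theorem swap_mem_symbolClass {a b : ℝ} {f : ℝ → ℝ → ℝ} (hf : f ∈ symbolClass a b) :
    Function.swap f ∈ symbolClass b a := by
  obtain ⟨g, hg, rfl⟩ := exists_mem_of_mem_span (t := symbolClass b a)
    (P := fun f g => g = Function.swap f) rfl (by rintro _ _ _ _ rfl rfl; rfl)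
    (by rintro _ _ _ rfl; rfl)
    (by
      rintro _ ⟨p, q, r, hp, hq, hpq, rfl⟩
      exact ⟨_, symbolMonomial_mem_symbolClass hq hp (by linarith),
        (swap_symbolMonomial p q r).symm⟩)
    hf
  exact hg

theorem hasDerivAt_symbolMonomial_fst (p q r v : ℝ) {x : ℝ} (hx : 0 < x) :
    HasDerivAt (fun u => symbolMonomial p q r u v)
      (p * symbolMonomial (p - 1) q r x v + 2 * r * symbolMonomial (p + 1) q (r - 1) x v) x := by
  have hpow : HasDerivAt (fun u : ℝ => u ^ p) (p * x ^ (p - 1)) x :=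
    Real.hasDerivAt_rpow_const (Or.inl hx.ne')
  have hsq : HasDerivAt (fun u : ℝ => u ^ 2 + v ^ 2) (2 * x) x := by
    simpa using (hasDerivAt_pow 2 x).add_const (v ^ 2)
  have hsum := hsq.rpow_const (p := r) (Or.inl (by positivity))
  refine ((hpow.mul_const (v ^ q)).mul hsum).congr_deriv ?_
  simp only [symbolMonomial, Real.rpow_add_one hx.ne']
  ring

theorem exists_hasDerivAt_fst_mem_symbolClass {a b : ℝ} {f : ℝ → ℝ → ℝ}
    (hf : f ∈ symbolClass a b) :
    ∃ g ∈ symbolClass (a + 1) b, ∀ v, ∀ x > 0, HasDerivAt (f · v) (g x v) x := by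
  refine exists_mem_of_mem_span
    (P := fun f g : ℝ → ℝ → ℝ => ∀ v, ∀ x : ℝ, x > 0 → HasDerivAt (f · v) (g x v) x)
    (fun v x _ => hasDerivAt_const x 0)
    (fun _ _ _ _ h₁ h₂ v x hx => (h₁ v x hx).add (h₂ v x hx))
    (fun c _ _ h v x hx => (h v x hx).const_mul c) ?_ hf
  rintro _ ⟨p, q, r, hp, hq, hpq, rfl⟩
  have hlower : symbolMonomial (p - 1) q r ∈ symbolClass (a + 1) b :=
    symbolMonomial_mem_symbolClass (by linarith) hq (by linarith)
  have hupper : symbolMonomial (p + 1) q (r - 1) ∈ symbolClass (a + 1) b :=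
    symbolMonomial_mem_symbolClass (by linarith) hq (by linarith)
  exact ⟨_, add_mem (smul_mem _ p hlower) (smul_mem _ (2 * r) hupper),
    fun v x hx => hasDerivAt_symbolMonomial_fst p q r v hx⟩

theorem exists_iteratedDeriv_fst_mem_symbolClass {a b : ℝ} {f : ℝ → ℝ → ℝ}
    (hf : f ∈ symbolClass a b) (n : ℕ) :
    ∃ g ∈ symbolClass (a + n) b, ∀ v, ∀ x > 0, iteratedDeriv n (f · v) x = g x v := by
  induction n with
  | zero => exact ⟨f, by simpa using hf, fun v x _ => by simp⟩
  | succ n ih =>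
    obtain ⟨g, hg, hfg⟩ := ih
    obtain ⟨h, hh, hgh⟩ := exists_hasDerivAt_fst_mem_symbolClass hg
    refine ⟨h, by rwa [Nat.cast_succ, ← add_assoc], fun v x hx => ?_⟩
    have hev : iteratedDeriv n (f · v) =ᶠ[𝓝 x] (g · v) :=
      eventually_of_mem (Ioi_mem_nhds hx) fun z hz => hfg v z hz
    rw [iteratedDeriv_succ, hev.deriv_eq]
    exact (hgh v x hx).deriv

theorem exists_iteratedDeriv_snd_mem_symbolClass {a b : ℝ} {f : ℝ → ℝ → ℝ}
    (hf : f ∈ symbolClass a b) (n : ℕ) :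
    ∃ g ∈ symbolClass a (b + n), ∀ x, ∀ y > 0, iteratedDeriv n (f x ·) y = g x y := by
  obtain ⟨g, hg, hfg⟩ := exists_iteratedDeriv_fst_mem_symbolClass (swap_mem_symbolClass hf) n
  exact ⟨Function.swap g, swap_mem_symbolClass hg, hfg⟩

theorem symbolMonomial_le {a b p q r x y : ℝ} (hp : -a ≤ p) (hq : -b ≤ q)
    (hpq : p + q + 2 * r = -(a + b)) (hx : 0 < x) (hy : 0 < y) :
    symbolMonomial p q r x y ≤ x ^ (-a) * y ^ (-b) := by
  have hsq : ∀ {z : ℝ}, 0 < z → ∀ e c : ℝ, z ^ e * (z ^ 2) ^ (-c) = z ^ (e - 2 * c) := by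
    intro z hz e c
    rw [← Real.rpow_natCast_mul hz.le, ← Real.rpow_add hz, Nat.cast_ofNat, mul_neg,
      sub_eq_add_neg]
  have hr : r = -((p + a) / 2 + (q + b) / 2) := by linarith
  calc symbolMonomial p q r x y
      = x ^ p * y ^ q * (x ^ 2 + y ^ 2) ^ (-((p + a) / 2 + (q + b) / 2)) := by
        rw [symbolMonomial, hr]
    _ ≤ x ^ p * y ^ q * ((x ^ 2) ^ (-((p + a) / 2)) * (y ^ 2) ^ (-((q + b) / 2))) := by
        gcongr
        exact Real.add_rpow_neg_add_le (by positivity) (by positivity) (by linarith)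
          (by linarith)
    _ = x ^ (-a) * y ^ (-b) := by
        rw [mul_mul_mul_comm, hsq hx, hsq hy]
        ring_nf

theorem exists_abs_le_of_mem_symbolClass {a b : ℝ} {f : ℝ → ℝ → ℝ}
    (hf : f ∈ symbolClass a b) :
    ∃ C > 0, ∀ x y, 0 < x → 0 < y → |f x y| ≤ C * x ^ (-a) * y ^ (-b) := by
  induction hf using Submodule.span_induction with
  | mem f hf =>
    obtain ⟨p, q, r, hp, hq, hpq, rfl⟩ := hf
    refine ⟨1, one_pos, fun x y hx hy => ?_⟩
    rw [abs_of_nonneg (by unfold symbolMonomial; positivity), one_mul]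
    exact symbolMonomial_le hp hq hpq hx hy
  | zero => exact ⟨1, one_pos, fun x y _ _ => by simp only [Pi.zero_apply, abs_zero]; positivity⟩
  | add f₁ f₂ _ _ ih₁ ih₂ =>
    obtain ⟨C₁, hC₁, h₁⟩ := ih₁
    obtain ⟨C₂, hC₂, h₂⟩ := ih₂
    refine ⟨C₁ + C₂, by positivity, fun x y hx hy => ?_⟩
    calc |(f₁ + f₂) x y| ≤ |f₁ x y| + |f₂ x y| := abs_add_le _ _
      _ ≤ C₁ * x ^ (-a) * y ^ (-b) + C₂ * x ^ (-a) * y ^ (-b) :=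
        add_le_add (h₁ x y hx hy) (h₂ x y hx hy)
      _ = (C₁ + C₂) * x ^ (-a) * y ^ (-b) := by ring
  | smul c f _ ih =>
    obtain ⟨C, hC, h⟩ := ih
    refine ⟨(|c| + 1) * C, by positivity, fun x y hx hy => ?_⟩
    calc |(c • f) x y| = |c| * |f x y| := by simp [abs_mul]
      _ ≤ (|c| + 1) * (C * x ^ (-a) * y ^ (-b)) :=
        mul_le_mul (by linarith) (h x y hx hy) (abs_nonneg _) (by positivity)
      _ = (|c| + 1) * C * x ^ (-a) * y ^ (-b) := by ring

end

/-- The homogeneous symbol `F(λ₁,λ₂) = λ₁^{2α₁} λ₂^{2α₂} / (λ₁² + λ₂²)^{α₁+α₂}`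
satisfies the Marcinkiewicz condition: for each pair `(a,b)` of orders there is
a constant `C` with `|∂^b_{λ₂} ∂^a_{λ₁} F| ≤ C λ₁^{-a} λ₂^{-b}` on `(0,∞)²`. -/
theorem riesz_symbol_marcinkiewicz (α₁ α₂ : ℝ) (h₁ : 0 < α₁) (h₂ : 0 < α₂)
    (a b : ℕ) :
    ∃ C : ℝ, 0 < C ∧ ∀ x y : ℝ, 0 < x → 0 < y →
      |iteratedDeriv b
          (fun v : ℝ => iteratedDeriv a
            (fun u : ℝ => u ^ (2 * α₁) * v ^ (2 * α₂) /
              (u ^ 2 + v ^ 2) ^ (α₁ + α₂)) x) y| ≤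
        C * x ^ (-(a : ℝ)) * y ^ (-(b : ℝ)) := by
  have hF : ∀ u v : ℝ, u ^ (2 * α₁) * v ^ (2 * α₂) / (u ^ 2 + v ^ 2) ^ (α₁ + α₂)
      = symbolMonomial (2 * α₁) (2 * α₂) (-(α₁ + α₂)) u v := by
    intro u v
    rw [symbolMonomial, Real.rpow_neg (by positivity), div_eq_mul_inv]
  have hF_mem : symbolMonomial (2 * α₁) (2 * α₂) (-(α₁ + α₂)) ∈ symbolClass 0 0 :=
    symbolMonomial_mem_symbolClass (by linarith) (by linarith) (by ring)
  obtain ⟨G, hG, hFG⟩ := exists_iteratedDeriv_fst_mem_symbolClass hF_mem a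
  obtain ⟨H, hH, hGH⟩ := exists_iteratedDeriv_snd_mem_symbolClass hG b
  obtain ⟨C, hC, hHC⟩ := exists_abs_le_of_mem_symbolClass hH
  refine ⟨C, hC, fun x y hx hy => ?_⟩
  have hinner : (fun v => iteratedDeriv a (symbolMonomial (2 * α₁) (2 * α₂) (-(α₁ + α₂)) · v) x)
      = (G x ·) := funext fun v => hFG v x hx
  simpa only [hF, hinner, hGH x y hy, zero_add] using hHC x y hx hy
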